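/- For a smooth solution of the full coupled steady system (Boussinesq momentum, incompressibility, convection–diffusion for T) with u = 0 on ∂Ω and the a priori bound ‖T − T_ref‖_{L²} ≤ M, the kinetic energy dissipation satisfies μ‖∇u‖²_{L²} ≤ ρβ|g| M ‖u‖_{L²}, hence by Poincaré's inequality ‖u‖_{L²} ≤ ρβ|g| C_P² M / μ. -/

import Mathlib

open MeasureTheory Real Set

/-- Partial derivative in direction `i`. -/
noncomputable def pd (f : (Fin 3 → ℝ) → ℝ) (i : Fin 3) (x : Fin 3 → ℝ) : ℝ :=
  fderiv ℝ f x (Pi.single i 1)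

/-- Divergence of a vector field on `ℝ³`. -/
noncomputable def vdiv (u : (Fin 3 → ℝ) → (Fin 3 → ℝ)) (x : Fin 3 → ℝ) : ℝ :=
  ∑ i, pd (fun y => u y i) i x

/-- Laplacian of a scalar field on `ℝ³`. -/
noncomputable def lap (f : (Fin 3 → ℝ) → ℝ) (x : Fin 3 → ℝ) : ℝ :=
  ∑ i, pd (pd f i) i x

/-- Euclidean norm of a vector in `ℝ³`. -/
noncomputable def enorm3 (g : Fin 3 → ℝ) : ℝ := Real.sqrt (∑ i, g i ^ 2)

/-- `n` is a unit outward-pointing normal field on the boundary of `Ω`. -/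
def IsOutwardNormal (Ω : Set (Fin 3 → ℝ)) (n : (Fin 3 → ℝ) → (Fin 3 → ℝ)) : Prop :=
  ∀ x ∈ frontier Ω, enorm3 (n x) = 1 ∧
    ∃ ε > 0, ∀ t ∈ Set.Ioo (0:ℝ) ε, x + t • n x ∉ closure Ω ∧ x - t • n x ∈ Ω

lemma oneD (s : Set ℝ) (hs : IsOpen s) (hb : Bornology.IsBounded s)
    (f : ℝ → ℝ) (hf : ContDiff ℝ 1 f) (h0 : ∀ x ∈ frontier s, f x = 0) :
    ∫ t in s, deriv f t = 0 := by
  obtain ⟨R, hR⟩ := hb.subset_ball 0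
  rw [Real.ball_eq_Ioo, zero_sub, zero_add] at hR
  set A : ℝ → ℝ := fun t => sSup (sᶜ ∩ Iio t) with hA
  set B : ℝ → ℝ := fun t => sInf (sᶜ ∩ Ioi t) with hB
  have hmem : ∀ t ∈ s, -R < t ∧ t < R := fun t ht => hR ht
  have hnR : (-R) ∉ s := fun h => absurd (hmem _ h).1 (by simp)
  have hRn : R ∉ s := fun h => absurd (hmem _ h).2 (by simp)
  have hneA : ∀ t ∈ s, (-R) ∈ sᶜ ∩ Iio t := fun t ht => ⟨hnR, (hmem t ht).1⟩
  have hneB : ∀ t ∈ s, R ∈ sᶜ ∩ Ioi t := fun t ht => ⟨hRn, (hmem t ht).2⟩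
  have hbdA : ∀ t : ℝ, BddAbove (sᶜ ∩ Iio t) := fun t =>
    ⟨t, fun r hr => le_of_lt hr.2⟩
  have hbdB : ∀ t : ℝ, BddBelow (sᶜ ∩ Ioi t) := fun t =>
    ⟨t, fun r hr => le_of_lt hr.2⟩
  have hAlt : ∀ t ∈ s, A t < t := by
    intro t ht
    obtain ⟨ε, hε, hball⟩ := Metric.isOpen_iff.1 hs t ht
    rw [Real.ball_eq_Ioo] at hball
    have : A t ≤ t - ε/2 := by
      apply csSup_le ⟨_, hneA t ht⟩
      intro r hr
      have hr2 : r < t := hr.2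
      by_contra hlt
      push_neg at hlt
      exact hr.1 (hball ⟨by linarith, by linarith⟩)
    linarith
  have hBgt : ∀ t ∈ s, t < B t := by
    intro t ht
    obtain ⟨ε, hε, hball⟩ := Metric.isOpen_iff.1 hs t ht
    rw [Real.ball_eq_Ioo] at hball
    have : t + ε/2 ≤ B t := by
      apply le_csInf ⟨_, hneB t ht⟩
      intro r hr
      have hr2 : t < r := hr.2
      by_contra hlt
      push_neg at hlt
      exact hr.1 (hball ⟨by linarith, by linarith⟩)
    linarith
  have hIooA : ∀ t ∈ s, Ioo (A t) t ⊆ s := by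
    intro t ht r hr
    by_contra hrs
    exact absurd (le_csSup (hbdA t) ⟨hrs, hr.2⟩) (not_le.2 hr.1)
  have hIooB : ∀ t ∈ s, Ioo t (B t) ⊆ s := by
    intro t ht r hr
    by_contra hrs
    exact absurd (csInf_le (hbdB t) ⟨hrs, hr.1⟩) (not_le.2 hr.2)
  have hAnm : ∀ t ∈ s, A t ∉ s := by
    intro t ht hAs
    obtain ⟨ε, hε, hball⟩ := Metric.isOpen_iff.1 hs _ hAs
    rw [Real.ball_eq_Ioo] at hball
    have : A t ≤ A t - ε/2 := by
      apply csSup_le ⟨_, hneA t ht⟩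
      intro r hr
      have hrA : r ≤ A t := le_csSup (hbdA t) hr
      have hr2 : r < t := hr.2
      by_contra hlt
      push_neg at hlt
      exact hr.1 (hball ⟨by linarith, by linarith⟩)
    linarith
  have hBnm : ∀ t ∈ s, B t ∉ s := by
    intro t ht hBs
    obtain ⟨ε, hε, hball⟩ := Metric.isOpen_iff.1 hs _ hBs
    rw [Real.ball_eq_Ioo] at hball
    have : B t + ε/2 ≤ B t := by
      apply le_csInf ⟨_, hneB t ht⟩
      intro r hr
      have hrB : B t ≤ r := csInf_le (hbdB t) hr
      have hr2 : t < r := hr.2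
      by_contra hlt
      push_neg at hlt
      exact hr.1 (hball ⟨by linarith, by linarith⟩)
    linarith
  have hIoo : ∀ t ∈ s, Ioo (A t) (B t) ⊆ s := by
    intro t ht r hr
    rcases lt_trichotomy r t with h | h | h
    · exact hIooA t ht ⟨hr.1, h⟩
    · exact h ▸ ht
    · exact hIooB t ht ⟨h, hr.2⟩
  have hAfr : ∀ t ∈ s, A t ∈ frontier s := by
    intro t ht
    rw [frontier, hs.interior_eq]
    refine ⟨?_, hAnm t ht⟩
    have h1 : A t ∈ closure (Ioo (A t) t) := by
      rw [closure_Ioo (ne_of_lt (hAlt t ht))]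
      exact ⟨le_refl _, le_of_lt (hAlt t ht)⟩
    exact closure_mono (hIooA t ht) h1
  have hBfr : ∀ t ∈ s, B t ∈ frontier s := by
    intro t ht
    rw [frontier, hs.interior_eq]
    refine ⟨?_, hBnm t ht⟩
    have h1 : B t ∈ closure (Ioo t (B t)) := by
      rw [closure_Ioo (ne_of_lt (hBgt t ht))]
      exact ⟨le_of_lt (hBgt t ht), le_refl _⟩
    exact closure_mono (hIooB t ht) h1
  have hrig : ∀ t ∈ s, ∀ r ∈ Ioo (A t) (B t), A r = A t ∧ B r = B t := by
    intro t ht r hr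
    have hrs : r ∈ s := hIoo t ht hr
    constructor
    · apply le_antisymm
      · apply csSup_le ⟨_, hneA r hrs⟩
        intro x hx
        by_contra hlt
        push_neg at hlt
        exact hx.1 (hIoo t ht ⟨hlt, lt_trans hx.2 hr.2⟩)
      · exact le_csSup (hbdA r) ⟨hAnm t ht, hr.1⟩
    · apply le_antisymm
      · exact csInf_le (hbdB r) ⟨hBnm t ht, hr.2⟩
      · apply le_csInf ⟨_, hneB r hrs⟩
        intro x hx
        by_contra hlt
        push_neg at hlt
        exact hx.1 (hIoo t ht ⟨lt_trans hr.1 hx.2, hlt⟩)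
  -- countable family of components
  set K : Set (ℝ × ℝ) := (fun q : ℚ => ((A q : ℝ), B q)) '' {q : ℚ | (q : ℝ) ∈ s} with hK
  have hKc : K.Countable := Countable.image (Set.to_countable _) _
  have hcover : ⋃ (p : K), Ioo (p : ℝ × ℝ).1 (p : ℝ × ℝ).2 = s := by
    apply Set.Subset.antisymm
    · rintro x hx
      simp only [Set.mem_iUnion] at hx
      obtain ⟨⟨p, hp⟩, hxp⟩ := hx
      obtain ⟨q, hq, rfl⟩ := hp
      exact hIoo _ hq hxp
    · intro t ht
      obtain ⟨q, hq⟩ := exists_rat_btwn (lt_trans (hAlt t ht) (hBgt t ht))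
      have hqIoo : (q : ℝ) ∈ Ioo (A t) (B t) := ⟨hq.1, hq.2⟩
      have hqs : (q : ℝ) ∈ s := hIoo t ht hqIoo
      have hrq := hrig t ht _ hqIoo
      simp only [Set.mem_iUnion]
      refine ⟨⟨(A q, B q), ⟨q, hqs, rfl⟩⟩, ?_⟩
      simp only [hrq.1, hrq.2]
      exact ⟨hAlt t ht, hBgt t ht⟩
  have : Countable K := hKc.to_subtype
  have hdisj : Pairwise (Function.onFun Disjoint
      (fun p : K => Ioo (p : ℝ × ℝ).1 (p : ℝ × ℝ).2)) := by
    rintro ⟨p₁, hp₁⟩ ⟨p₂, hp₂⟩ hne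
    obtain ⟨q₁, hq₁, rfl⟩ := hp₁
    obtain ⟨q₂, hq₂, rfl⟩ := hp₂
    simp only [Function.onFun]
    rw [Set.disjoint_left]
    intro x hx₁ hx₂
    have h1 := hrig _ hq₁ x hx₁
    have h2 := hrig _ hq₂ x hx₂
    apply hne
    ext : 1
    simp [← h1.1, ← h2.1, ← h1.2, ← h2.2]
  have hder : Continuous (deriv f) := hf.continuous_deriv le_rfl
  have hint : IntegrableOn (deriv f) s := by
    have : IntegrableOn (deriv f) (closure s) volume :=
      hder.continuousOn.integrableOn_compact hb.isCompact_closure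
    exact this.mono_set subset_closure
  rw [← hcover]
  rw [integral_iUnion (fun p => measurableSet_Ioo) hdisj
    (by rw [hcover]; exact hint)]
  have hzero : ∀ p : K, (∫ t in Ioo (p : ℝ × ℝ).1 (p : ℝ × ℝ).2, deriv f t) = 0 := by
    rintro ⟨p, hp⟩
    obtain ⟨q, hq, rfl⟩ := hp
    have hab : A q < B q := lt_trans (hAlt _ hq) (hBgt _ hq)
    have h1 : ∫ t in Ioo (A ↑q) (B ↑q), deriv f t =
        ∫ t in (A ↑q)..(B ↑q), deriv f t := by
      rw [intervalIntegral.integral_of_le hab.le, integral_Ioc_eq_integral_Ioo]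
    rw [h1, intervalIntegral.integral_deriv_eq_sub
      (fun x _ => (hf.differentiable one_ne_zero).differentiableAt)
      (hder.intervalIntegrable _ _)]
    rw [h0 _ (hAfr _ hq), h0 _ (hBfr _ hq), sub_zero]
  simp only [hzero, tsum_zero]


lemma integrableOn_of_cont (Ω : Set (Fin 3 → ℝ)) (hΩb : Bornology.IsBounded Ω)
    (G : (Fin 3 → ℝ) → ℝ) (hG : Continuous G) : IntegrableOn G Ω := by
  have h : IntegrableOn G (closure Ω) volume :=
    hG.continuousOn.integrableOn_compact hΩb.isCompact_closure
  exact h.mono_set subset_closure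

lemma continuous_pd (F : (Fin 3 → ℝ) → ℝ) (hF : ContDiff ℝ 1 F) (i : Fin 3) :
    Continuous (pd F i) :=
  (hF.continuous_fderiv one_ne_zero).clm_apply continuous_const

lemma insertNth_eq_affine (i : Fin 3) (y : Fin 2 → ℝ) (t : ℝ) :
    (i.insertNth t y : Fin 3 → ℝ) =
      t • (Pi.single i 1 : Fin 3 → ℝ) + (i.insertNth (0:ℝ) y : Fin 3 → ℝ) := by
  refine funext fun j => ?_
  by_cases h : j = i
  · subst h; simp
  · obtain ⟨j', hj⟩ := Fin.exists_succAbove_eq h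
    subst hj
    simp [Fin.insertNth_apply_succAbove, Pi.single_eq_of_ne (Fin.succAbove_ne i j')]

lemma pd_integral_zero (Ω : Set (Fin 3 → ℝ)) (hΩo : IsOpen Ω)
    (hΩb : Bornology.IsBounded Ω) (F : (Fin 3 → ℝ) → ℝ) (hF : ContDiff ℝ 1 F)
    (h0 : ∀ x ∈ frontier Ω, F x = 0) (i : Fin 3) :
    ∫ x in Ω, pd F i x = 0 := by
  obtain ⟨R, hR⟩ := hΩb.subset_closedBall 0
  set e := MeasurableEquiv.piFinSuccAbove (fun _ : Fin 3 => ℝ) i with he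
  have mp : MeasurePreserving e volume
      ((volume : Measure ℝ).prod (volume : Measure (Fin 2 → ℝ))) :=
    measurePreserving_piFinSuccAbove (fun _ => (volume : Measure ℝ)) i
  have hGc : Continuous (pd F i) := continuous_pd F hF i
  have hind : Integrable (Set.indicator Ω (pd F i)) volume := by
    rw [integrable_indicator_iff hΩo.measurableSet]
    exact integrableOn_of_cont Ω hΩb _ hGc
  have key : ∫ x, Set.indicator Ω (pd F i) x =
      ∫ z : ℝ × (Fin 2 → ℝ), Set.indicator Ω (pd F i) (e.symm z)
        ∂((volume : Measure ℝ).prod (volume : Measure (Fin 2 → ℝ))) := by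
    rw [← MeasurePreserving.integral_comp mp e.measurableEmbedding
      (fun z => Set.indicator Ω (pd F i) (e.symm z))]
    simp
  have hintc : Integrable (fun z : ℝ × (Fin 2 → ℝ) =>
      Set.indicator Ω (pd F i) (e.symm z))
      ((volume : Measure ℝ).prod (volume : Measure (Fin 2 → ℝ))) := by
    exact ((MeasurePreserving.symm e mp).integrable_comp_emb
      e.symm.measurableEmbedding).mpr hind
  rw [← integral_indicator hΩo.measurableSet, key,
    integral_prod_symm _ hintc]
  have inner : ∀ y : Fin 2 → ℝ,
      (∫ t : ℝ, Set.indicator Ω (pd F i) (e.symm (t, y))) = 0 := by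
    intro y
    set L : ℝ → (Fin 3 → ℝ) := fun t => i.insertNth t y with hL
    have heL : ∀ t, e.symm (t, y) = L t := by
      intro t
      simp [he, MeasurableEquiv.piFinSuccAbove, hL, Fin.insertNthEquiv]
    have hLc : Continuous L := by
      have : L = fun t => t • (Pi.single i 1 : Fin 3 → ℝ) + (i.insertNth (0:ℝ) y : Fin 3 → ℝ) := by
        funext t; exact insertNth_eq_affine i y t
      rw [this]
      exact (continuous_id.smul continuous_const).add continuous_const
    have hLD : ∀ t, HasDerivAt L (Pi.single i 1) t := by
      intro t
      have : L = fun t => t • (Pi.single i 1 : Fin 3 → ℝ) + (i.insertNth (0:ℝ) y : Fin 3 → ℝ) := by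
        funext t; exact insertNth_eq_affine i y t
      rw [this]
      simpa using ((hasDerivAt_id t).smul_const (Pi.single i (1:ℝ) : Fin 3 → ℝ)).add_const
        (i.insertNth (0:ℝ) y : Fin 3 → ℝ)
    set s : Set ℝ := L ⁻¹' Ω with hs
    have hso : IsOpen s := hΩo.preimage hLc
    have hsb : Bornology.IsBounded s := by
      apply (Metric.isBounded_Icc (-R) R).subset
      intro t ht
      have hx : L t ∈ Metric.closedBall (0 : Fin 3 → ℝ) R := hR ht
      rw [Metric.mem_closedBall, dist_zero_right] at hx
      have h1 : |t| ≤ ‖L t‖ := by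
        have := norm_le_pi_norm (L t) i
        simpa [hL, Real.norm_eq_abs] using this
      rw [Set.mem_Icc]
      constructor <;> [linarith [abs_le.1 (h1.trans hx) |>.1];
        linarith [abs_le.1 (h1.trans hx) |>.2]]
    have hder : ∀ t, HasDerivAt (F ∘ L) (pd F i (L t)) t := by
      intro t
      have hFd : HasFDerivAt F (fderiv ℝ F (L t)) (L t) :=
        ((hF.differentiable one_ne_zero) (L t)).hasFDerivAt
      exact hFd.comp_hasDerivAt t (hLD t)
    have hFL : ContDiff ℝ 1 (F ∘ L) := by
      apply hF.comp
      have : L = fun t => t • (Pi.single i 1 : Fin 3 → ℝ) + (i.insertNth (0:ℝ) y : Fin 3 → ℝ) := by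
        funext t; exact insertNth_eq_affine i y t
      rw [this]
      exact (contDiff_id.smul contDiff_const).add contDiff_const
    have hfr : ∀ t ∈ frontier s, (F ∘ L) t = 0 := by
      intro t ht
      exact h0 _ (hLc.frontier_preimage_subset Ω ht)
    have h00 := oneD s hso hsb (F ∘ L) hFL hfr
    calc (∫ t : ℝ, Set.indicator Ω (pd F i) (e.symm (t, y)))
        = ∫ t : ℝ, Set.indicator s (fun t => pd F i (L t)) t := by
          refine integral_congr_ae (Filter.Eventually.of_forall fun t => ?_)
          show Ω.indicator (pd F i) (e.symm (t, y)) = s.indicator (fun t => pd F i (L t)) t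
          rw [heL t]
          by_cases hts : t ∈ s
          · rw [Set.indicator_of_mem hts]
            exact Set.indicator_of_mem (Set.mem_preimage.mp hts) _
          · rw [Set.indicator_of_notMem hts]
            exact Set.indicator_of_notMem (fun hh => hts (Set.mem_preimage.mpr hh)) _
      _ = ∫ t in s, pd F i (L t) := integral_indicator hso.measurableSet
      _ = ∫ t in s, deriv (F ∘ L) t := by
          apply setIntegral_congr_fun hso.measurableSet
          intro t _
          exact ((hder t).deriv).symm
      _ = 0 := h00
  simp only [inner, integral_zero]

section kit

variable {f g : (Fin 3 → ℝ) → ℝ} {x : Fin 3 → ℝ} {i : Fin 3}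

lemma pd_mul (hf : DifferentiableAt ℝ f x) (hg : DifferentiableAt ℝ g x) :
    pd (fun y => f y * g y) i x = f x * pd g i x + g x * pd f i x := by
  unfold pd
  rw [fderiv_fun_mul hf hg]
  simp [ContinuousLinearMap.add_apply, ContinuousLinearMap.smul_apply]

lemma pd_const_mul (c : ℝ) (hf : DifferentiableAt ℝ f x) :
    pd (fun y => c * f y) i x = c * pd f i x := by
  unfold pd
  rw [fderiv_const_mul hf]
  simp

lemma pd_add (hf : DifferentiableAt ℝ f x) (hg : DifferentiableAt ℝ g x) :
    pd (fun y => f y + g y) i x = pd f i x + pd g i x := by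
  unfold pd
  rw [fderiv_fun_add hf hg]
  simp

lemma pd_sub (hf : DifferentiableAt ℝ f x) (hg : DifferentiableAt ℝ g x) :
    pd (fun y => f y - g y) i x = pd f i x - pd g i x := by
  unfold pd
  rw [fderiv_fun_sub hf hg]
  simp

lemma pd_sum {ι : Type*} (s : Finset ι) (F : ι → (Fin 3 → ℝ) → ℝ)
    (hF : ∀ k ∈ s, DifferentiableAt ℝ (F k) x) :
    pd (fun y => ∑ k ∈ s, F k y) i x = ∑ k ∈ s, pd (F k) i x := by
  unfold pd
  rw [fderiv_fun_sum hF]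
  simp

lemma contDiff_pd (hf : ContDiff ℝ (⊤ : ℕ∞) f) (i : Fin 3) : ContDiff ℝ (⊤ : ℕ∞) (pd f i) :=
  (hf.fderiv_right (by simp)).clm_apply contDiff_const

end kit

lemma expand_divW (ρ μ : ℝ) (u : (Fin 3 → ℝ) → (Fin 3 → ℝ)) (p : (Fin 3 → ℝ) → ℝ)
    (hu : ContDiff ℝ (⊤ : ℕ∞) u) (hp : ContDiff ℝ (⊤ : ℕ∞) p) (x : Fin 3 → ℝ) :
    ∑ j, pd (fun y => ρ/2 * ((∑ i, u y i * u y i) * u y j) + p y * u y j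
        - μ * ∑ i, u y i * pd (fun z => u z i) j y) j x
      = ρ * ∑ i, ∑ j, u x i * u x j * pd (fun z => u z i) j x
        + (ρ/2 * (∑ i, u x i * u x i) + p x) * vdiv u x
        + ∑ j, u x j * pd p j x
        - μ * ∑ i, ∑ j, pd (fun z => u z i) j x * pd (fun z => u z i) j x
        - μ * ∑ i, u x i * lap (fun z => u z i) x := by
  have hui : ∀ i, ContDiff ℝ (⊤ : ℕ∞) (fun y => u y i) := fun i => contDiff_pi.mp hu i
  have hud : ∀ i, DifferentiableAt ℝ (fun y => u y i) x := fun i =>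
    ((hui i).differentiable (by simp)).differentiableAt
  have hDc : ∀ i j, ContDiff ℝ (⊤ : ℕ∞) (pd (fun z => u z i) j) := fun i j =>
    contDiff_pd (hui i) j
  have hDd : ∀ i j, DifferentiableAt ℝ (pd (fun z => u z i) j) x := fun i j =>
    ((hDc i j).differentiable (by simp)).differentiableAt
  have hpd : DifferentiableAt ℝ p x := (hp.differentiable (by simp)).differentiableAt
  have hS : DifferentiableAt ℝ (fun y => ∑ i, u y i * u y i) x :=
    DifferentiableAt.fun_sum fun i _ => (hud i).mul (hud i)
  have hpdS : ∀ j, pd (fun y => ∑ i, u y i * u y i) j x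
      = ∑ i, (u x i * pd (fun z => u z i) j x + u x i * pd (fun z => u z i) j x) := by
    intro j
    rw [pd_sum Finset.univ (fun i => fun y => u y i * u y i)
      (fun i _ => (hud i).mul (hud i))]
    exact Finset.sum_congr rfl fun i _ => pd_mul (hud i) (hud i)
  have hWj : ∀ j, pd (fun y => ρ/2 * ((∑ i, u y i * u y i) * u y j) + p y * u y j
        - μ * ∑ i, u y i * pd (fun z => u z i) j y) j x
      = ρ/2 * ((∑ i, u x i * u x i) * pd (fun z => u z j) j x
          + u x j * ∑ i, (u x i * pd (fun z => u z i) j x + u x i * pd (fun z => u z i) j x))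
        + (p x * pd (fun z => u z j) j x + u x j * pd p j x)
        - μ * ∑ i, (u x i * pd (pd (fun z => u z i) j) j x
            + pd (fun z => u z i) j x * pd (fun z => u z i) j x) := by
    intro j
    have hA1 : DifferentiableAt ℝ (fun y => (∑ i, u y i * u y i) * u y j) x :=
      hS.mul (hud j)
    have hA : DifferentiableAt ℝ (fun y => ρ/2 * ((∑ i, u y i * u y i) * u y j)) x :=
      (differentiableAt_const _).mul hA1
    have hA2 : DifferentiableAt ℝ (fun y => p y * u y j) x := hpd.mul (hud j)
    have hC0 : DifferentiableAt ℝ (fun y => ∑ i, u y i * pd (fun z => u z i) j y) x :=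
      DifferentiableAt.fun_sum fun i _ => (hud i).mul (hDd i j)
    have hC : DifferentiableAt ℝ (fun y => μ * ∑ i, u y i * pd (fun z => u z i) j y) x :=
      (differentiableAt_const _).mul hC0
    rw [pd_sub (hA.fun_add hA2) hC, pd_add hA hA2, pd_const_mul _ hA1,
      pd_mul hS (hud j), pd_mul hpd (hud j), pd_const_mul _ hC0,
      pd_sum Finset.univ (fun i => fun y => u y i * pd (fun z => u z i) j y)
        (fun i _ => (hud i).mul (hDd i j)), hpdS j]
    have : ∀ i, pd (fun y => u y i * pd (fun z => u z i) j y) j x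
        = u x i * pd (pd (fun z => u z i) j) j x
          + pd (fun z => u z i) j x * pd (fun z => u z i) j x := fun i =>
      pd_mul (hud i) (hDd i j)
    rw [Finset.sum_congr rfl fun i _ => this i]
  rw [Finset.sum_congr rfl fun j _ => hWj j]
  unfold vdiv lap
  simp only [Fin.sum_univ_three]
  ring

lemma integral_cs {α : Type*} [MeasurableSpace α] (ν : Measure α) (f g : α → ℝ)
    (hf2 : Integrable (fun a => f a ^ 2) ν) (hg2 : Integrable (fun a => g a ^ 2) ν)
    (hfg : Integrable (fun a => f a * g a) ν) :
    ∫ a, f a * g a ∂ν ≤ Real.sqrt (∫ a, f a ^ 2 ∂ν) * Real.sqrt (∫ a, g a ^ 2 ∂ν) := by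
  set A := ∫ a, f a ^ 2 ∂ν with hA
  set B := ∫ a, f a * g a ∂ν with hB
  set C := ∫ a, g a ^ 2 ∂ν with hC
  have hA0 : 0 ≤ A := integral_nonneg fun a => sq_nonneg _
  have hC0 : 0 ≤ C := integral_nonneg fun a => sq_nonneg _
  have hq : ∀ t : ℝ, 0 ≤ A * t ^ 2 + 2 * B * t + C := by
    intro t
    have h1 : ∀ a, (t * f a + g a) ^ 2 = t ^ 2 * f a ^ 2 + 2 * t * (f a * g a) + g a ^ 2 := by
      intro a; ring
    have h2 : (0:ℝ) ≤ ∫ a, (t * f a + g a) ^ 2 ∂ν := integral_nonneg fun a => sq_nonneg _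
    have h3 : ∫ a, (t * f a + g a) ^ 2 ∂ν
        = t ^ 2 * A + 2 * t * B + C := by
      have e1 : (fun a => (t * f a + g a) ^ 2)
          = fun a => (t ^ 2 * f a ^ 2 + 2 * t * (f a * g a)) + g a ^ 2 :=
        funext fun a => by ring
      have i1 : Integrable (fun a => t ^ 2 * f a ^ 2) ν := hf2.const_mul _
      have i2 : Integrable (fun a => 2 * t * (f a * g a)) ν := hfg.const_mul _
      have i12 : Integrable (fun a => t ^ 2 * f a ^ 2 + 2 * t * (f a * g a)) ν := i1.add i2
      rw [hA, hB, hC, e1, integral_add i12 hg2, integral_add i1 i2,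
        integral_const_mul, integral_const_mul]
    nlinarith [h2, h3]
  have hdisc : discrim A (2 * B) C ≤ 0 := by
    rcases eq_or_lt_of_le hA0 with h | h
    · rw [discrim]
      have hB0 : B = 0 := by
        by_contra hBne
        rcases lt_or_gt_of_ne hBne with hBlt | hBgt
        · have := hq ((-C - 1) / (2 * B))
          rw [← h] at this
          have h2B : 2 * B < 0 := by linarith
          have : 0 ≤ 2 * B * ((-C - 1) / (2 * B)) + C := by linarith [this]
          rw [mul_div_cancel₀ _ (by linarith : (2:ℝ) * B ≠ 0)] at this
          linarith
        · have := hq ((-C - 1) / (2 * B))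
          rw [← h] at this
          have : 0 ≤ 2 * B * ((-C - 1) / (2 * B)) + C := by linarith [this]
          rw [mul_div_cancel₀ _ (by positivity : (2:ℝ) * B ≠ 0)] at this
          linarith
      rw [hB0, ← h]
      simp [mul_nonneg, hC0]
    · exact discrim_le_zero fun t => by
        have := hq t
        nlinarith [this]
  have hBsq : B ^ 2 ≤ A * C := by
    rw [discrim] at hdisc
    nlinarith
  calc B ≤ |B| := le_abs_self B
    _ = Real.sqrt (B ^ 2) := (Real.sqrt_sq_eq_abs B).symm
    _ ≤ Real.sqrt (A * C) := Real.sqrt_le_sqrt hBsq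
    _ = Real.sqrt A * Real.sqrt C := Real.sqrt_mul hA0 C

/-- quantitative bound on the aqueous humor velocity in terms of the
thermal deviation. -/
theorem stmt_13 (Ω : Set (Fin 3 → ℝ)) (hΩo : IsOpen Ω) (hΩb : Bornology.IsBounded Ω)
    (ρ μ β Cp k Tref CP M : ℝ)
    (hρ : 0 < ρ) (hμ : 0 < μ) (hβ : 0 < β) (hCp : 0 < Cp) (hk : 0 < k)
    (hCP : 0 < CP) (hM : 0 ≤ M)
    (g : Fin 3 → ℝ)
    (hPoincare : ∀ v : (Fin 3 → ℝ) → ℝ, ContDiff ℝ 1 v → (∀ x ∈ frontier Ω, v x = 0) →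
      Real.sqrt (∫ x in Ω, v x ^ 2) ≤ CP * Real.sqrt (∫ x in Ω, ∑ i, pd v i x ^ 2))
    (u : (Fin 3 → ℝ) → (Fin 3 → ℝ)) (p T : (Fin 3 → ℝ) → ℝ)
    (hu : ContDiff ℝ (⊤ : ℕ∞) u) (hp : ContDiff ℝ (⊤ : ℕ∞) p) (hT : ContDiff ℝ (⊤ : ℕ∞) T)
    (hdiv : ∀ x ∈ Ω, vdiv u x = 0)
    (hbc : ∀ x ∈ frontier Ω, u x = 0)
    (hmom : ∀ x ∈ Ω, ∀ i,
      ρ * (∑ j, u x j * pd (fun y => u y i) j x) - μ * lap (fun y => u y i) x + pd p i x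
        = -(ρ * β * (T x - Tref)) * g i)
    (hheat : ∀ x ∈ Ω, ρ * Cp * (∑ j, u x j * pd T j x) - k * lap T x = 0)
    (hTM : Real.sqrt (∫ x in Ω, (T x - Tref) ^ 2) ≤ M) :
    μ * (∫ x in Ω, ∑ i, ∑ j, (pd (fun y => u y i) j x) ^ 2) ≤
        ρ * β * enorm3 g * M * Real.sqrt (∫ x in Ω, ∑ i, u x i ^ 2) ∧
      Real.sqrt (∫ x in Ω, ∑ i, u x i ^ 2) ≤ ρ * β * enorm3 g * CP ^ 2 * M / μ := by
  classical
  have hui : ∀ i, ContDiff ℝ (⊤ : ℕ∞) (fun y => u y i) := fun i => contDiff_pi.mp hu i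
  have hDc : ∀ i j, ContDiff ℝ (⊤ : ℕ∞) (pd (fun z => u z i) j) := fun i j => contDiff_pd (hui i) j
  have hucont : ∀ i, Continuous fun y => u y i := fun i => (hui i).continuous
  have hDcont : ∀ i j, Continuous (pd (fun z => u z i) j) := fun i j => (hDc i j).continuous
  have hTc : Continuous T := hT.continuous
  have hpc : Continuous p := hp.continuous
  have hIG : ∀ G : (Fin 3 → ℝ) → ℝ, Continuous G → IntegrableOn G Ω := fun G hG =>
    integrableOn_of_cont Ω hΩb G hG
  set W : Fin 3 → (Fin 3 → ℝ) → ℝ := fun j y =>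
    ρ/2 * ((∑ i, u y i * u y i) * u y j) + p y * u y j
      - μ * ∑ i, u y i * pd (fun z => u z i) j y with hW
  have hWs : ∀ j, ContDiff ℝ (⊤ : ℕ∞) (W j) := by
    intro j
    exact ((contDiff_const.mul ((ContDiff.sum fun i _ => (hui i).mul (hui i)).mul
      (hui j))).add (hp.mul (hui j))).sub
      (contDiff_const.mul (ContDiff.sum fun i _ => (hui i).mul (hDc i j)))
  have hW0 : ∀ j, ∀ x ∈ frontier Ω, W j x = 0 := by
    intro j x hx
    have hu0 : u x = 0 := hbc x hx
    simp [hW, hu0]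
  have hdivW0 : ∫ x in Ω, (∑ j, pd (W j) j x) = 0 := by
    rw [integral_finset_sum Finset.univ
      (fun j _ => hIG _ (contDiff_pd (hWs j) j).continuous)]
    exact Finset.sum_eq_zero fun j _ =>
      pd_integral_zero Ω hΩo hΩb (W j) ((hWs j).of_le (by simp)) (hW0 j) j
  have key : ∀ x ∈ Ω, ∑ j, pd (W j) j x
      = -(ρ*β) * ((T x - Tref) * (∑ i, g i * u x i))
        - μ * ∑ i, ∑ j, (pd (fun y => u y i) j x)^2 := by
    intro x hx
    have he := expand_divW ρ μ u p hu hp x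
    rw [hdiv x hx, mul_zero, add_zero] at he
    have hgoal : ∑ j, pd (W j) j x
        = ρ * ∑ i, ∑ j, u x i * u x j * pd (fun z => u z i) j x
          + ∑ j, u x j * pd p j x
          - μ * ∑ i, ∑ j, pd (fun z => u z i) j x * pd (fun z => u z i) j x
          - μ * ∑ i, u x i * lap (fun z => u z i) x := by
      rw [hW]; exact he
    rw [hgoal]
    have hm0 := hmom x hx 0
    have hm1 := hmom x hx 1
    have hm2 := hmom x hx 2
    simp only [Fin.sum_univ_three] at hm0 hm1 hm2 ⊢
    linear_combination u x 0 * hm0 + u x 1 * hm1 + u x 2 * hm2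
  have iT : IntegrableOn (fun x => (T x - Tref) * (∑ i, g i * u x i)) Ω :=
    hIG _ ((hTc.sub continuous_const).mul
      (continuous_finset_sum _ fun i _ => continuous_const.mul (hucont i)))
  have iD : IntegrableOn (fun x => ∑ i, ∑ j, (pd (fun y => u y i) j x)^2) Ω :=
    hIG _ (continuous_finset_sum _ fun i _ =>
      continuous_finset_sum _ fun j _ => (hDcont i j).pow 2)
  set J : ℝ := ∫ x in Ω, (T x - Tref) * (∑ i, g i * u x i) with hJdef
  set I2 : ℝ := ∫ x in Ω, ∑ i, ∑ j, (pd (fun y => u y i) j x)^2 with hI2def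
  have hmain : μ * I2 = -(ρ*β) * J := by
    have h1 : ∫ x in Ω, (∑ j, pd (W j) j x)
        = ∫ x in Ω, (-(ρ*β) * ((T x - Tref) * (∑ i, g i * u x i))
            - μ * ∑ i, ∑ j, (pd (fun y => u y i) j x)^2) :=
      setIntegral_congr_fun hΩo.measurableSet fun x hx => key x hx
    rw [hdivW0] at h1
    rw [integral_sub (iT.const_mul _) (iD.const_mul _), integral_const_mul,
      integral_const_mul] at h1
    rw [← hJdef, ← hI2def] at h1
    linarith
  have hI2nn : 0 ≤ I2 := by
    rw [hI2def]
    exact integral_nonneg fun x => Finset.sum_nonneg fun i _ =>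
      Finset.sum_nonneg fun j _ => sq_nonneg _
  set a : ℝ := Real.sqrt (∫ x in Ω, ∑ i, u x i ^ 2) with hadef
  set b : ℝ := Real.sqrt I2 with hbdef
  have ha0 : 0 ≤ a := Real.sqrt_nonneg _
  have hb0 : 0 ≤ b := Real.sqrt_nonneg _
  have hUnn : 0 ≤ ∫ x in Ω, ∑ i, u x i ^ 2 :=
    integral_nonneg fun x => Finset.sum_nonneg fun i _ => sq_nonneg _
  have iU : IntegrableOn (fun x => ∑ i, u x i ^ 2) Ω :=
    hIG _ (continuous_finset_sum _ fun i _ => (hucont i).pow 2)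
  have iT2 : IntegrableOn (fun x => (T x - Tref) ^ 2) Ω :=
    hIG _ ((hTc.sub continuous_const).pow 2)
  have iAbsT : IntegrableOn (fun x => |T x - Tref| * Real.sqrt (∑ i, u x i ^ 2)) Ω := by
    apply hIG
    exact ((hTc.sub continuous_const).abs).mul
      ((continuous_finset_sum _ fun i _ => (hucont i).pow 2).sqrt)
  -- finite-dimensional Cauchy-Schwarz
  have hCSfin : ∀ x, |∑ i, g i * u x i| ≤ enorm3 g * Real.sqrt (∑ i, u x i ^ 2) := by
    intro x
    have h := Finset.sum_mul_sq_le_sq_mul_sq Finset.univ g (fun i => u x i)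
    rw [← Real.sqrt_sq_eq_abs, enorm3, ← Real.sqrt_mul
      (Finset.sum_nonneg fun i _ => sq_nonneg (g i))]
    exact Real.sqrt_le_sqrt h
  -- L2 Cauchy-Schwarz
  have hL2 : ∫ x in Ω, |T x - Tref| * Real.sqrt (∑ i, u x i ^ 2) ≤ M * a := by
    have h := integral_cs (volume.restrict Ω) (fun x => |T x - Tref|)
      (fun x => Real.sqrt (∑ i, u x i ^ 2))
      (by simpa [sq_abs, IntegrableOn] using iT2)
      (by
        have : (fun x => Real.sqrt (∑ i, u x i ^ 2) ^ 2) = fun x => ∑ i, u x i ^ 2 := by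
          funext x
          exact Real.sq_sqrt (Finset.sum_nonneg fun i _ => sq_nonneg _)
        rw [this]; exact iU)
      iAbsT
    have e1 : ∫ x in Ω, |T x - Tref| ^ 2 = ∫ x in Ω, (T x - Tref) ^ 2 := by
      refine integral_congr_ae (Filter.Eventually.of_forall fun x => ?_)
      simp [sq_abs]
    have e2 : ∫ x in Ω, Real.sqrt (∑ i, u x i ^ 2) ^ 2 = ∫ x in Ω, ∑ i, u x i ^ 2 := by
      refine integral_congr_ae (Filter.Eventually.of_forall fun x => ?_)
      show Real.sqrt (∑ i, u x i ^ 2) ^ 2 = _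
      exact Real.sq_sqrt (Finset.sum_nonneg fun i _ => sq_nonneg _)
    rw [e1, e2] at h
    calc ∫ x in Ω, |T x - Tref| * Real.sqrt (∑ i, u x i ^ 2)
        ≤ Real.sqrt (∫ x in Ω, (T x - Tref) ^ 2) * a := h
      _ ≤ M * a := mul_le_mul_of_nonneg_right hTM ha0
  have hJbound : -J ≤ enorm3 g * (M * a) := by
    have hptw : ∀ x, -((T x - Tref) * (∑ i, g i * u x i))
        ≤ enorm3 g * (|T x - Tref| * Real.sqrt (∑ i, u x i ^ 2)) := by
      intro x
      have h1 : -((T x - Tref) * (∑ i, g i * u x i)) ≤ |T x - Tref| * |∑ i, g i * u x i| := by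
        calc -((T x - Tref) * (∑ i, g i * u x i)) ≤ |(T x - Tref) * (∑ i, g i * u x i)| :=
              neg_le_abs _
          _ = |T x - Tref| * |∑ i, g i * u x i| := abs_mul _ _
      calc -((T x - Tref) * (∑ i, g i * u x i)) ≤ |T x - Tref| * |∑ i, g i * u x i| := h1
        _ ≤ |T x - Tref| * (enorm3 g * Real.sqrt (∑ i, u x i ^ 2)) :=
            mul_le_mul_of_nonneg_left (hCSfin x) (abs_nonneg _)
        _ = enorm3 g * (|T x - Tref| * Real.sqrt (∑ i, u x i ^ 2)) := by ring
    have hint1 : -J = ∫ x in Ω, -((T x - Tref) * (∑ i, g i * u x i)) := by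
      rw [hJdef, ← integral_neg]
    have hint2 : ∫ x in Ω, -((T x - Tref) * (∑ i, g i * u x i))
        ≤ ∫ x in Ω, enorm3 g * (|T x - Tref| * Real.sqrt (∑ i, u x i ^ 2)) :=
      integral_mono iT.neg (iAbsT.const_mul _) hptw
    rw [hint1]
    calc ∫ x in Ω, -((T x - Tref) * (∑ i, g i * u x i))
        ≤ ∫ x in Ω, enorm3 g * (|T x - Tref| * Real.sqrt (∑ i, u x i ^ 2)) := hint2
      _ = enorm3 g * ∫ x in Ω, |T x - Tref| * Real.sqrt (∑ i, u x i ^ 2) :=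
          integral_const_mul _ _
      _ ≤ enorm3 g * (M * a) :=
          mul_le_mul_of_nonneg_left hL2 (Real.sqrt_nonneg _)
  have part1 : μ * I2 ≤ ρ * β * enorm3 g * M * a := by
    calc μ * I2 = -(ρ*β) * J := hmain
      _ = (ρ*β) * (-J) := by ring
      _ ≤ (ρ*β) * (enorm3 g * (M * a)) :=
          mul_le_mul_of_nonneg_left hJbound (by positivity)
      _ = ρ * β * enorm3 g * M * a := by ring
  -- Poincare
  have hPo : ∀ i, ∫ x in Ω, (u x i)^2 ≤ CP^2 * ∫ x in Ω, ∑ j, (pd (fun y => u y i) j x)^2 := by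
    intro i
    have hvb : ∀ x ∈ frontier Ω, u x i = 0 := by
      intro x hx
      rw [hbc x hx]
      rfl
    have hP := hPoincare (fun y => u y i) ((hui i).of_le (by simp)) hvb
    have h1 : 0 ≤ ∫ x in Ω, (u x i)^2 := integral_nonneg fun x => sq_nonneg _
    have h2 : 0 ≤ ∫ x in Ω, ∑ j, (pd (fun y => u y i) j x)^2 :=
      integral_nonneg fun x => Finset.sum_nonneg fun j _ => sq_nonneg _
    nlinarith [Real.sq_sqrt h1, Real.sq_sqrt h2, Real.sqrt_nonneg (∫ x in Ω, (u x i)^2),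
      Real.sqrt_nonneg (∫ x in Ω, ∑ j, (pd (fun y => u y i) j x)^2)]
  have hsum : ∫ x in Ω, ∑ i, u x i ^ 2 ≤ CP^2 * I2 := by
    have e1 : ∫ x in Ω, ∑ i, u x i ^ 2 = ∑ i, ∫ x in Ω, u x i ^ 2 :=
      integral_finset_sum Finset.univ fun i _ => hIG _ ((hucont i).pow 2)
    have e2 : I2 = ∑ i, ∫ x in Ω, ∑ j, (pd (fun y => u y i) j x)^2 := by
      rw [hI2def]
      exact integral_finset_sum Finset.univ fun i _ =>
        hIG _ (continuous_finset_sum _ fun j _ => (hDcont i j).pow 2)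
    rw [e1, e2, Finset.mul_sum]
    exact Finset.sum_le_sum fun i _ => hPo i
  have hab : a ≤ CP * b := by
    rw [hadef, hbdef]
    calc Real.sqrt (∫ x in Ω, ∑ i, u x i ^ 2) ≤ Real.sqrt (CP^2 * I2) :=
          Real.sqrt_le_sqrt hsum
      _ = CP * Real.sqrt I2 := by
          rw [Real.sqrt_mul (sq_nonneg CP), Real.sqrt_sq hCP.le]
  have hIb : I2 = b * b := (Real.mul_self_sqrt hI2nn).symm
  have hg0 : 0 ≤ enorm3 g := Real.sqrt_nonneg _
  have hK : 0 ≤ ρ * β * enorm3 g * M :=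
    mul_nonneg (mul_nonneg (mul_nonneg hρ.le hβ.le) hg0) hM
  constructor
  · exact part1
  · rw [le_div_iff₀ hμ]
    rcases eq_or_lt_of_le hb0 with hbz | hbpos
    · have ha' : a ≤ 0 := by
        calc a ≤ CP * b := hab
          _ = 0 := by rw [← hbz, mul_zero]
      have : a = 0 := le_antisymm ha' ha0
      rw [this, zero_mul]
      exact mul_nonneg (mul_nonneg (mul_nonneg (mul_nonneg hρ.le hβ.le) hg0)
        (sq_nonneg CP)) hM
    · have hE : μ * (b * b) ≤ (ρ * β * enorm3 g * M) * a := by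
        rw [← hIb]; exact part1
      have h6 : μ * b * b ≤ (ρ * β * enorm3 g * M) * CP * b := by
        nlinarith [mul_le_mul_of_nonneg_left hab hK]
      have h5 : μ * b ≤ (ρ * β * enorm3 g * M) * CP :=
        le_of_mul_le_mul_right (by linarith) hbpos
      nlinarith [mul_le_mul_of_nonneg_left hab hμ.le,
        mul_le_mul_of_nonneg_left h5 hCP.le]
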